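/- arXiv:0710.3232 — 2 statements merged into one kernel-verified Lean document; each statement's English description precedes it below -/
import Mathlib

section
/- Let V be an n-dimensional vector space over a field F, let z₁,...,zₙ be a basis of V*, let G ≤ GL(V) be finite, and let U = {u₁,...,u_r} be the union of the G-orbits of the zᵢ. Then the Chern classes c₁,...,c_r (the coefficients of ∏ᵢ(T − uᵢ) ∈ F[V][T]) are G-invariant polynomials, and the Jacobian matrix (∂cᵢ/∂z_k) has rank n over F(V). -/
open MvPolynomial

abbrev GLn (F : Type*) [Field F] (n : ℕ) := (Fin n → F) ≃ₗ[F] (Fin n → F)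

variable {F : Type*} [Field F] {n : ℕ}

/-- Matrix of the contragredient action of `g` on the coordinate functions:
`g · z_i = ∑ j (actMat g i j) z_j`. -/
noncomputable def actMat (g : GLn F n) : Matrix (Fin n) (Fin n) F :=
  Matrix.of fun i j => g.symm (Pi.single j 1) i

/-- Action of `g ∈ GL(V)` on polynomials `F[V]` (contragredient action). -/
noncomputable def polyAct (g : GLn F n) : MvPolynomial (Fin n) F →ₐ[F] MvPolynomial (Fin n) F :=
  aeval fun i => ∑ j, C (actMat g i j) * X j

/-- The degree-one polynomial corresponding to a linear form on `V`. -/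
noncomputable def linToPoly (z : (Fin n → F) →ₗ[F] F) : MvPolynomial (Fin n) F :=
  ∑ j, C (z (Pi.single j 1)) * X j

/-- The invariant ring `F[V]^G` as a subalgebra of `F[V]`. -/
noncomputable def invSub (G : Subgroup (GLn F n)) : Subalgebra F (MvPolynomial (Fin n) F) where
  carrier := {f | ∀ g ∈ G, polyAct g f = f}
  add_mem' := fun {a b} ha hb g hg => by rw [map_add, ha g hg, hb g hg]
  mul_mem' := fun {a b} ha hb g hg => by rw [map_mul, ha g hg, hb g hg]
  algebraMap_mem' := fun r g hg => (polyAct g).commutes r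

/-- Action of `g` on a differential 1-form `ω = ∑ i (w i) dz_i`; the result is the
coefficient vector of `g · ω`. -/
noncomputable def oneFormAct (g : GLn F n) (w : Fin n → MvPolynomial (Fin n) F) :
    Fin n → MvPolynomial (Fin n) F :=
  fun j => ∑ i, polyAct g (w i) * C (actMat g i j)

/-- The coefficient of `dz_J` in `g · dz_I` (a minor determinant of `actMat g`). -/
noncomputable def minorDet (g : GLn F n) (I J : Finset (Fin n)) : F :=
  if h : J.card = I.card then
    Matrix.det (Matrix.of fun a b : Fin I.card =>
      actMat g (I.orderIsoOfFin rfl a) (J.orderIsoOfFin h b))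
  else 0

/-- Action of `g` on a differential form `μ = ∑_I u_I dz_I`, given by its coefficient
function `u : Finset (Fin n) → F[V]`. -/
noncomputable def formAct (g : GLn F n) (u : Finset (Fin n) → MvPolynomial (Fin n) F) :
    Finset (Fin n) → MvPolynomial (Fin n) F :=
  fun J => ∑ I : Finset (Fin n), polyAct g (u I) * C (minorDet g I J)

/-- The sign arising when wedging `dz_I ∧ dz_J` into `dz_(I ∪ J)` for disjoint `I`, `J`. -/
def wsign (I J : Finset (Fin n)) : ℤ :=
  (-1) ^ ((I ×ˢ J).filter fun p => p.2 < p.1).card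

/-- Wedge product of differential forms in terms of coefficient functions. -/
noncomputable def wedgeF (u v : Finset (Fin n) → MvPolynomial (Fin n) F) :
    Finset (Fin n) → MvPolynomial (Fin n) F :=
  fun K => ∑ I ∈ K.powerset, wsign I (K \ I) • (u I * v (K \ I))

/-- The constant 0-form `1`. -/
noncomputable def unitForm : Finset (Fin n) → MvPolynomial (Fin n) F :=
  fun S => if S = ∅ then 1 else 0

/-- Iterated wedge product of a list of forms. -/
noncomputable def iterWedge (L : List (Finset (Fin n) → MvPolynomial (Fin n) F)) :
    Finset (Fin n) → MvPolynomial (Fin n) F :=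
  L.foldr wedgeF unitForm

/-- A 1-form, viewed as a differential form via its coefficient function. -/
noncomputable def oneToForm (w : Fin n → MvPolynomial (Fin n) F) :
    Finset (Fin n) → MvPolynomial (Fin n) F :=
  fun S => if h : S.card = 1 then w (S.min' (Finset.card_pos.mp (by omega))) else 0

/-- The fixed space of `g` in `V`. -/
noncomputable def fixedSpace (g : GLn F n) : Submodule F (Fin n → F) :=
  LinearMap.ker (g.toLinearMap - LinearMap.id)

/-- A reflection: an element of finite order whose fixed space is a hyperplane. -/
def IsReflection (g : GLn F n) : Prop :=
  IsOfFinOrder g ∧ Module.finrank F (fixedSpace g) = n - 1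

/-- A transvection: a (necessarily nondiagonalizable) reflection of determinant one. -/
def IsTransvection (g : GLn F n) : Prop :=
  IsReflection g ∧ LinearMap.det g.toLinearMap = 1 ∧ g ≠ 1

/-- The pointwise stabilizer `G_H` of a subspace `H` in `G`. -/
def pointStab (G : Subgroup (GLn F n)) (H : Submodule F (Fin n → F)) : Subgroup (GLn F n) where
  carrier := {g | g ∈ G ∧ ∀ v ∈ H, g v = v}
  one_mem' := ⟨G.one_mem, fun v _ => rfl⟩
  mul_mem' := fun {a b} ha hb => ⟨G.mul_mem ha.1 hb.1, fun v hv => by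
    show a (b v) = v
    rw [hb.2 v hv, ha.2 v hv]⟩
  inv_mem' := fun {a} ha => ⟨G.inv_mem ha.1, fun v hv => by
    show a.symm v = v
    conv_lhs => rw [← ha.2 v hv]
    exact a.symm_apply_apply v⟩

/-- `K_H`: the subgroup of `G_H` of elements of determinant one
(the transvections in `G_H` together with the identity). -/
noncomputable def KH (G : Subgroup (GLn F n)) (H : Submodule F (Fin n → F)) :
    Subgroup (GLn F n) :=
  pointStab G H ⊓ MonoidHom.ker LinearEquiv.det

/-- `e_H = |G_H : K_H|`. -/
noncomputable def eH (G : Subgroup (GLn F n)) (H : Submodule F (Fin n → F)) : ℕ :=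
  ((KH G H).subgroupOf (pointStab G H)).index

/-- The transvection root space of `G_H`: the span of the root vectors of the
transvections in `G_H` (the root vector of `t` spans the range of `t - 1`). -/
noncomputable def trvSpace (G : Subgroup (GLn F n)) (H : Submodule F (Fin n → F)) :
    Submodule F (Fin n → F) :=
  ⨆ g ∈ {g : GLn F n | g ∈ pointStab G H ∧ IsTransvection g},
    LinearMap.range (g.toLinearMap - LinearMap.id)

/-- `b_H`: the dimension of the transvection root space of `G_H`. -/
noncomputable def bH (G : Subgroup (GLn F n)) (H : Submodule F (Fin n → F)) : ℕ :=
  Module.finrank F (trvSpace G H)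

lemma actMat_mul (g h : GLn F n) (i k : Fin n) :
    ∑ j, actMat h i j * actMat g j k = actMat (g * h) i k := by
  have : actMat (g * h) i k = h.symm.toLinearMap (g.symm (Pi.single k 1)) i := rfl
  rw [this, LinearMap.pi_apply_eq_sum_univ h.symm.toLinearMap, Finset.sum_apply]
  refine Finset.sum_congr rfl fun j _ => ?_
  have hpi : (fun j' => if j = j' then (1:F) else 0) = Pi.single j 1 := by
    ext j'; by_cases hh : j = j' <;> simp [hh, Pi.single_apply]
  rw [hpi]
  simp [actMat, mul_comm]

lemma polyAct_X (g : GLn F n) (i : Fin n) :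
    polyAct g (X i) = ∑ j, C (actMat g i j) * X j := by
  simp [polyAct]

lemma polyAct_mul (g h : GLn F n) (p : MvPolynomial (Fin n) F) :
    polyAct g (polyAct h p) = polyAct (g * h) p := by
  have : ((polyAct g).comp (polyAct h)) = polyAct (g * h) := by
    apply MvPolynomial.algHom_ext
    intro i
    simp only [AlgHom.comp_apply, polyAct_X, map_sum, map_mul]
    have hC : ∀ a : F, polyAct g (C a) = C a := fun a => by
      simp [polyAct, aeval_C, algebraMap_eq]
    simp only [hC, polyAct_X, Finset.mul_sum]
    rw [Finset.sum_comm]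
    refine Finset.sum_congr rfl fun k _ => ?_
    rw [← actMat_mul, map_sum, Finset.sum_mul]
    refine Finset.sum_congr rfl fun j _ => ?_
    rw [C_mul]; ring
  exact AlgHom.congr_fun this p

lemma polyAct_one (p : MvPolynomial (Fin n) F) : polyAct (1 : GLn F n) p = p := by
  have : polyAct (1 : GLn F n) = AlgHom.id F _ := by
    apply MvPolynomial.algHom_ext
    intro i
    rw [polyAct_X]
    have h1 : ∀ j, actMat (1 : GLn F n) i j = (Pi.single j 1 : Fin n → F) i := fun j => rfl
    rw [Finset.sum_eq_single i]
    · rw [h1, Pi.single_eq_same]; simp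
    · intro j _ hj
      rw [h1, Pi.single_eq_of_ne (Ne.symm hj)]; simp
    · simp
  rw [this]; rfl

lemma polyAct_injective (g : GLn F n) : Function.Injective (polyAct g) := by
  intro p q hpq
  have := congrArg (polyAct g⁻¹) hpq
  rwa [polyAct_mul, polyAct_mul, inv_mul_cancel, polyAct_one, polyAct_one] at this

lemma polyAct_C (g : GLn F n) (a : F) : polyAct g (C a) = C a := by
  simp [polyAct, aeval_C, algebraMap_eq]

lemma prod_act_eq {G : Subgroup (GLn F n)} (U : Finset (MvPolynomial (Fin n) F))
    (hU : ∀ p, p ∈ U ↔ ∃ g ∈ G, ∃ i : Fin n, p = polyAct g (X i))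
    {g : GLn F n} (hg : g ∈ G) :
    ∏ u ∈ U, (Polynomial.X - Polynomial.C (polyAct g u)) =
      ∏ u ∈ U, (Polynomial.X - Polynomial.C u) := by
  have hmem : ∀ h : GLn F n, h ∈ G → ∀ u ∈ U, polyAct h u ∈ U := by
    intro h hh u hu
    obtain ⟨g', hg', i, rfl⟩ := (hU u).mp hu
    rw [polyAct_mul]
    exact (hU _).mpr ⟨h * g', G.mul_mem hh hg', i, rfl⟩
  refine Finset.prod_bij (fun u _ => polyAct g u) (fun u hu => hmem g hg u hu)
    (fun a ha b hb hab => polyAct_injective g hab) ?_ (fun a _ => rfl)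
  intro v hv
  refine ⟨polyAct g⁻¹ v, hmem g⁻¹ (G.inv_mem hg) v hv, ?_⟩
  show polyAct g (polyAct g⁻¹ v) = v
  rw [polyAct_mul, mul_inv_cancel, polyAct_one]

lemma chern_inv {G : Subgroup (GLn F n)} (U : Finset (MvPolynomial (Fin n) F))
    (hU : ∀ p, p ∈ U ↔ ∃ g ∈ G, ∃ i : Fin n, p = polyAct g (X i))
    {g : GLn F n} (hg : g ∈ G) (k : ℕ) :
    polyAct g ((∏ u ∈ U, (Polynomial.X - Polynomial.C u)).coeff k) =
      (∏ u ∈ U, (Polynomial.X - Polynomial.C u)).coeff k := by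
  have h1 := (Polynomial.coeff_map (polyAct g).toRingHom
    (p := ∏ u ∈ U, (Polynomial.X - Polynomial.C u)) k).symm
  refine Eq.trans h1 ?_
  rw [Polynomial.map_prod]
  simp only [Polynomial.map_sub, Polynomial.map_X, Polynomial.map_C, AlgHom.coe_toRingHom]
  exact congrArg (fun q => Polynomial.coeff q k) (prod_act_eq U hU hg)

section Deriv

variable (U : Finset (MvPolynomial (Fin n) F))

lemma natdeg_P : (∏ u ∈ U, (Polynomial.X - Polynomial.C u)).natDegree = U.card := by
  rw [Polynomial.natDegree_prod_of_monic _ _ (fun u _ => Polynomial.monic_X_sub_C u)]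
  simp

lemma key_identity (j k : Fin n) (hXk : X k ∈ U) :
    ∑ i ∈ Finset.range (U.card + 1),
        pderiv j ((∏ u ∈ U, (Polynomial.X - Polynomial.C u)).coeff i) * (X k) ^ i =
      if j = k then -(Polynomial.eval (X k) (∏ u ∈ U, (Polynomial.X - Polynomial.C u)).derivative)
      else 0 := by
  set P : Polynomial (MvPolynomial (Fin n) F) := ∏ u ∈ U, (Polynomial.X - Polynomial.C u) with hP
  have heval : Polynomial.eval (X k) P = 0 := by
    rw [hP, Polynomial.eval_prod]
    refine Finset.prod_eq_zero hXk ?_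
    simp
  have h0 : pderiv j (Polynomial.eval (X k) P) = 0 := by rw [heval]; simp
  rw [Polynomial.eval_eq_sum_range, natdeg_P, map_sum] at h0
  by_cases hjk : j = k
  · subst hjk
    simp only [Derivation.leibniz, Derivation.leibniz_pow, pderiv_X_self, smul_eq_mul,
      mul_one] at h0
    rw [Finset.sum_add_distrib] at h0
    have hder : ∑ i ∈ Finset.range (U.card + 1), P.coeff i * ((i : ℕ) • X j ^ (i - 1)) =
        Polynomial.eval (X j) P.derivative := by
      rw [Polynomial.eval_eq_sum_range' (n := U.card + 1)
        (lt_of_le_of_lt P.natDegree_derivative_le (by rw [natdeg_P]; omega))]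
      rw [Finset.sum_range_succ', Finset.sum_range_succ]
      simp only [Polynomial.coeff_derivative]
      have hc : P.coeff (U.card + 1) = 0 :=
        Polynomial.coeff_eq_zero_of_natDegree_lt (by rw [natdeg_P]; omega)
      rw [hc]
      simp only [zero_smul, mul_zero, add_zero, zero_mul, zero_add]
      refine Finset.sum_congr rfl fun i _ => ?_
      rw [nsmul_eq_mul]
      push_cast
      ring
    rw [hder] at h0
    have h2 : ∑ i ∈ Finset.range (U.card + 1), X j ^ i * pderiv j (P.coeff i) =
        -(Polynomial.eval (X j) P.derivative) := by linear_combination h0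
    rw [if_pos rfl, ← h2]
    refine Finset.sum_congr rfl fun i _ => ?_
    ring
  · rw [if_neg hjk]
    have hx : pderiv j (X k : MvPolynomial (Fin n) F) = 0 :=
      pderiv_X_of_ne (Ne.symm hjk)
    simp only [Derivation.leibniz, Derivation.leibniz_pow, hx, smul_zero, smul_eq_mul,
      mul_zero, zero_add] at h0
    rw [← h0]
    refine Finset.sum_congr rfl fun i _ => ?_
    ring

end Deriv

lemma deriv_eval_ne_zero (U : Finset (MvPolynomial (Fin n) F)) (k : Fin n) (hXk : X k ∈ U) :
    Polynomial.eval (X k) (∏ u ∈ U, (Polynomial.X - Polynomial.C u)).derivative ≠ 0 := by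
  classical
  rw [← Finset.mul_prod_erase U _ hXk, Polynomial.derivative_mul,
    Polynomial.derivative_X_sub_C, Polynomial.eval_add, Polynomial.eval_mul,
    Polynomial.eval_mul, Polynomial.eval_sub, Polynomial.eval_X, Polynomial.eval_C,
    sub_self, zero_mul, add_zero, Polynomial.eval_one, one_mul, Polynomial.eval_prod]
  rw [Finset.prod_ne_zero_iff]
  intro u hu
  simp only [Polynomial.eval_sub, Polynomial.eval_X, Polynomial.eval_C]
  exact sub_ne_zero.mpr (Ne.symm (Finset.mem_erase.mp hu).1)


/-- the Chern classes of the union `U` of the `G`-orbits of the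
coordinate functions (the coefficients of `∏_{u ∈ U} (T - u)`) are `G`-invariant, and
their Jacobian matrix with respect to `z₁,…,zₙ` has rank `n` over `F(V)`. -/
theorem stmt2 {F : Type*} [Field F] {n : ℕ} (G : Subgroup (GLn F n)) [Finite G]
    (U : Finset (MvPolynomial (Fin n) F))
    (hU : ∀ p, p ∈ U ↔ ∃ g ∈ G, ∃ i : Fin n, p = polyAct g (X i)) :
    (∀ g ∈ G, ∀ k : ℕ,
      polyAct g ((∏ u ∈ U, (Polynomial.X - Polynomial.C u)).coeff k) =
        (∏ u ∈ U, (Polynomial.X - Polynomial.C u)).coeff k) ∧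
    Matrix.rank (Matrix.of fun (i : Fin (U.card + 1)) (k : Fin n) =>
      algebraMap (MvPolynomial (Fin n) F) (FractionRing (MvPolynomial (Fin n) F))
        (pderiv k ((∏ u ∈ U, (Polynomial.X - Polynomial.C u)).coeff (i : ℕ)))) = n := by
  classical
  constructor
  · exact fun g hg k => chern_inv U hU hg k
  set K := FractionRing (MvPolynomial (Fin n) F)
  set φ := algebraMap (MvPolynomial (Fin n) F) K with hφ
  have hφinj : Function.Injective φ := IsFractionRing.injective _ _
  set P : Polynomial (MvPolynomial (Fin n) F) := ∏ u ∈ U, (Polynomial.X - Polynomial.C u) with hP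
  set M : Matrix (Fin (U.card + 1)) (Fin n) K :=
    Matrix.of fun (i : Fin (U.card + 1)) (k : Fin n) => φ (pderiv k (P.coeff (i : ℕ))) with hM
  have hXmem : ∀ k : Fin n, X k ∈ U := fun k =>
    (hU _).mpr ⟨1, G.one_mem, k, (polyAct_one _).symm⟩
  set A : Matrix (Fin n) (Fin (U.card + 1)) K :=
    Matrix.of fun (k : Fin n) (i : Fin (U.card + 1)) => φ (X k) ^ (i : ℕ) with hA
  set d : Fin n → K := fun k => -(φ (Polynomial.eval (X k) P.derivative)) with hd
  have hAM : A * M = Matrix.diagonal d := by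
    ext k j
    rw [Matrix.mul_apply, Matrix.diagonal_apply]
    have : ∑ i : Fin (U.card + 1), A k i * M i j =
        φ (∑ i ∈ Finset.range (U.card + 1), pderiv j (P.coeff i) * (X k) ^ i) := by
      rw [map_sum, ← Fin.sum_univ_eq_sum_range]
      refine Finset.sum_congr rfl fun i _ => ?_
      rw [map_mul, map_pow]
      simp only [hA, hM, Matrix.of_apply]
      ring
    rw [this, key_identity U j k (hXmem k)]
    by_cases hjk : j = k
    · subst hjk
      rw [if_pos rfl, if_pos rfl, map_neg]
    · rw [if_neg hjk, if_neg (Ne.symm hjk), map_zero]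
  have hdne : ∀ k, d k ≠ 0 := by
    intro k
    simp only [hd, neg_ne_zero]
    intro h
    exact deriv_eval_ne_zero U k (hXmem k) (hφinj (by rwa [map_zero]))
  have hrankAM : (A * M).rank = n := by
    rw [hAM, Matrix.rank_diagonal]
    rw [Fintype.card_eq.mpr ⟨Equiv.subtypeUnivEquiv hdne⟩, Fintype.card_fin]
  refine le_antisymm (M.rank_le_width) ?_
  calc (n : ℕ) = (A * M).rank := hrankAM.symm
    _ ≤ M.rank := Matrix.rank_mul_le_right A M
end

section
/- Let G_H be a group of reflections about a single hyperplane H = ker l_H in an n-dimensional space V, with K_H the kernel of det on G_H and b = b_H the dimension of the transvection root space. Choose a basis v₁,...,vₙ of V with v₁,...,v_{n−1} a basis of H, v₁,...,v_b independent transvection root vectors in K_H, and vₙ ∉ H with l_H(vₙ) = 1, and let z₁,...,zₙ be the dual basis of V*. If μ = Σ_I u_I dz_I is a differential form invariant under K_H and J is an index set with J ∩ {1,...,b} ≠ ∅ and n ∉ J, then l_H divides the coefficient u_J. -/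
/-!
Pick `i ∈ J` with `i < b` and the transvection `t v = v + z_n(v) e_i` in `G_H`, and put
`K = J - i + n`. Since `t` acts on `dz_i` by `dz_i ↦ dz_i - dz_n` and fixes the other `dz_j`, the
only forms `dz_I` whose image under `t` involves `dz_K` are `dz_K` itself (coefficient `1`) and
`dz_J` (coefficient `±1`). So the `dz_K`-coefficient of `t · μ = μ` reads
`t · u_K ± t · u_J = u_K`. As `t` fixes `H = {z_n = 0}` pointwise, `t · f` and `f` agree on `H`;
restricting to `H` leaves `u_J|_H = 0`, that is `z_n ∣ u_J`.
-/

open MvPolynomial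

variable {F : Type*} [Field F] {n : ℕ}

open Function Matrix

theorem Finset.card_insert_erase_of_notMem {α : Type*} [DecidableEq α] {s : Finset α} {a b : α}
    (ha : a ∈ s) (hb : b ∉ s) : (insert b (s.erase a)).card = s.card := by
  rw [card_insert_of_notMem (fun h => hb (mem_of_mem_erase h)), card_erase_add_one ha]

namespace Matrix

variable {ι R : Type*} [Fintype ι] [DecidableEq ι] [CommRing R]

theorem det_eq_zero_of_row_eq_smul (A : Matrix ι ι R) {x y : ι} (hxy : x ≠ y) (c : R)
    (h : A x = c • A y) : A.det = 0 := by
  rw [← det_updateRow_add_smul_self A hxy (-c)]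
  exact det_eq_zero_of_row_eq_zero x fun j => by simp [h]

theorem det_ne_zero_of_eq_ite [IsDomain R] (A : Matrix ι ι R) {f : ι → ι} (hf : Injective f)
    {s : ι → R} (hs : ∀ a, s a ≠ 0) (hA : ∀ a b, A a b = if f a = b then s a else 0) :
    A.det ≠ 0 := by
  set σ : Equiv.Perm ι := Equiv.ofBijective f hf.bijective_of_finite
  have : A = of fun a b => s a * σ.permMatrix R a b := by
    ext a b
    simp [hA, PEquiv.toMatrix_apply, σ]
  rw [this, det_mul_column, det_permutation]
  refine mul_ne_zero (Finset.prod_ne_zero_iff.mpr fun a _ => hs a) ?_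
  rcases Int.units_eq_one_or (Equiv.Perm.sign σ) with h | h <;> simp [h]

end Matrix

namespace MvPolynomial

variable {σ R : Type*} [CommRing R] [DecidableEq σ]

theorem X_dvd_sub_aeval_update_X (i : σ) (f : MvPolynomial σ R) :
    X i ∣ f - aeval (update X i 0) f := by
  induction f using MvPolynomial.induction_on with
  | C a => simp
  | add p q hp hq => simpa [add_sub_add_comm] using dvd_add hp hq
  | mul_X p j hp =>
    have hj : X i ∣ X j - update (X : σ → MvPolynomial σ R) i 0 j := by
      rcases eq_or_ne j i with rfl | hji <;> simp [*]
    have : p * X j - aeval (update X i 0) (p * X j) =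
        (p - aeval (update X i 0) p) * X j + aeval (update X i 0) p * (X j - update X i 0 j) := by
      simp only [map_mul, aeval_X]
      ring
    rw [this]
    exact dvd_add (dvd_mul_of_dvd_left hp _) (dvd_mul_of_dvd_right hj _)

theorem X_dvd_iff_aeval_update_X_eq_zero {i : σ} {f : MvPolynomial σ R} :
    X i ∣ f ↔ aeval (update (X : σ → MvPolynomial σ R) i 0) f = 0 := by
  refine ⟨?_, fun h => by simpa only [h, sub_zero] using X_dvd_sub_aeval_update_X i f⟩
  rintro ⟨g, rfl⟩
  simp

end MvPolynomial

theorem actMat_eq_toMatrix' (g : GLn F n) :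
    actMat g = LinearMap.toMatrix' g.symm.toLinearMap := by
  ext a j
  simp [actMat, LinearMap.toMatrix'_apply]

theorem minorDet_eq_det_submatrix (g : GLn F n) {I K : Finset (Fin n)} (h : K.card = I.card) :
    minorDet g I K = ((actMat g).submatrix (I.orderEmbOfFin rfl) (K.orderEmbOfFin h)).det := by
  simp only [minorDet, h, dite_true, Finset.coe_orderIsoOfFin_apply]
  rfl

theorem minorDet_eq_zero_of_row_eq_zero (g : GLn F n) {I K : Finset (Fin n)} {x : Fin n}
    (hx : x ∈ I) (hrow : ∀ z ∈ K, actMat g x z = 0) : minorDet g I K = 0 := by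
  by_cases h : K.card = I.card
  · obtain ⟨a, rfl⟩ : x ∈ Set.range (I.orderEmbOfFin rfl) := by simpa using hx
    rw [minorDet_eq_det_submatrix g h]
    exact det_eq_zero_of_row_eq_zero a fun b => hrow _ (K.orderEmbOfFin_mem h b)
  · simp [minorDet, h]

theorem minorDet_eq_zero_of_row_eq_smul (g : GLn F n) {I K : Finset (Fin n)} {x y : Fin n}
    (hx : x ∈ I) (hy : y ∈ I) (hxy : x ≠ y) (c : F)
    (hrow : ∀ z ∈ K, actMat g x z = c * actMat g y z) : minorDet g I K = 0 := by
  by_cases h : K.card = I.card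
  · obtain ⟨a, rfl⟩ : x ∈ Set.range (I.orderEmbOfFin rfl) := by simpa using hx
    obtain ⟨b, rfl⟩ : y ∈ Set.range (I.orderEmbOfFin rfl) := by simpa using hy
    rw [minorDet_eq_det_submatrix g h]
    refine det_eq_zero_of_row_eq_smul _ (fun hab => hxy (congrArg _ hab)) c ?_
    ext z
    exact hrow _ (K.orderEmbOfFin_mem h z)
  · simp [minorDet, h]

theorem actMat_apply_of_forall_apply_eq_self {g : GLn F n} {ℓ : Fin n}
    (hg : ∀ v, v ℓ = 0 → g v = v) (a : Fin n) {j : Fin n} (hj : j ≠ ℓ) :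
    actMat g a j = (1 : Matrix (Fin n) (Fin n) F) a j := by
  have : g.symm (Pi.single j 1) = Pi.single j 1 :=
    g.symm_apply_eq.mpr (hg _ (by simp [hj.symm])).symm
  simp [actMat, this, Pi.single_apply, one_apply]

/-- `aeval (update X ℓ 0)` restricts a polynomial to the hyperplane `z_ℓ = 0`. -/
theorem aeval_update_X_polyAct {g : GLn F n} {ℓ : Fin n} (hg : ∀ v, v ℓ = 0 → g v = v)
    (f : MvPolynomial (Fin n) F) :
    aeval (update (X : Fin n → MvPolynomial (Fin n) F) ℓ 0) (polyAct g f) =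
      aeval (update X ℓ 0) f := by
  rw [← AlgHom.comp_apply]
  congr 1
  refine algHom_ext fun a => ?_
  simp only [AlgHom.comp_apply, polyAct, aeval_X, map_sum, map_mul, aeval_C]
  rw [Finset.sum_eq_single a]
  · rcases eq_or_ne a ℓ with rfl | ha
    · simp
    · simp [actMat_apply_of_forall_apply_eq_self hg a ha, ha]
  · intro j _ hja
    rcases eq_or_ne j ℓ with rfl | hj
    · simp
    · simp [actMat_apply_of_forall_apply_eq_self hg a hj, hja.symm]
  · simp

section Transvection

variable {t : GLn F n} {i ℓ : Fin n}

theorem toMatrix'_eq_transvection (ht : ∀ v, t v = v + v ℓ • Pi.single i 1) :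
    LinearMap.toMatrix' t.toLinearMap = transvection i ℓ (1 : F) := by
  ext a b
  by_cases hb : ℓ = b <;>
    simp [LinearMap.toMatrix'_apply, ht, transvection, single_apply, Pi.single_apply, one_apply,
      hb, eq_comm]

theorem det_eq_one_of_transvection (hil : i ≠ ℓ)
    (ht : ∀ v, t v = v + v ℓ • Pi.single i 1) :
    LinearMap.det t.toLinearMap = 1 := by
  rw [← LinearMap.det_toMatrix', toMatrix'_eq_transvection ht, det_transvection_of_ne _ _ hil]

theorem actMat_eq_transvection (hil : i ≠ ℓ) (ht : ∀ v, t v = v + v ℓ • Pi.single i 1) :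
    actMat t = transvection i ℓ (-1 : F) := by
  have hinv : actMat t * transvection i ℓ 1 = 1 := by
    rw [actMat_eq_toMatrix', ← toMatrix'_eq_transvection ht, ← LinearMap.toMatrix'_comp]
    simp
  calc actMat t = actMat t * (transvection i ℓ 1 * transvection i ℓ (-1)) := by
        rw [transvection_mul_transvection_same _ _ hil, add_neg_cancel, transvection_zero,
          Matrix.mul_one]
    _ = transvection i ℓ (-1) := by rw [← Matrix.mul_assoc, hinv, Matrix.one_mul]

end Transvection

section MinorsOfTransvection

variable {g : GLn F n} {i ℓ : Fin n} {c : F}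

theorem actMat_apply_of_ne (hA : actMat g = transvection i ℓ c) {x : Fin n} (hx : x ≠ i)
    (z : Fin n) : actMat g x z = (1 : Matrix (Fin n) (Fin n) F) x z := by
  simp [hA, transvection, hx.symm]

theorem minorDet_self_of_notMem (hA : actMat g = transvection i ℓ c) {K : Finset (Fin n)}
    (hiK : i ∉ K) : minorDet g K K = 1 := by
  set e := K.orderEmbOfFin rfl
  have : (actMat g).submatrix e e =
      (1 : Matrix (Fin n) (Fin n) F).submatrix e.toEmbedding e.toEmbedding := by
    ext a b
    exact actMat_apply_of_ne hA (ne_of_mem_of_not_mem (K.orderEmbOfFin_mem rfl a) hiK) _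
  rw [minorDet_eq_det_submatrix g rfl, this, submatrix_one_embedding, det_one]

/-- The minor is a signed permutation matrix: row `i` has its only entry `c` in column `ℓ`, and
every other row `x` has its only entry `1` in column `x`. -/
theorem minorDet_insert_erase_ne_zero (hil : i ≠ ℓ) (hA : actMat g = transvection i ℓ c)
    (hc : c ≠ 0) {J : Finset (Fin n)} (hiJ : i ∈ J) (hℓJ : ℓ ∉ J) :
    minorDet g J (insert ℓ (J.erase i)) ≠ 0 := by
  set K := insert ℓ (J.erase i)
  have hK : K.card = J.card := Finset.card_insert_erase_of_notMem hiJ hℓJ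
  set e₁ := J.orderEmbOfFin rfl
  set e₂ := K.orderEmbOfFin hK
  have hℓ : ∀ a, e₁ a ≠ ℓ := fun a =>
    ne_of_mem_of_not_mem (J.orderEmbOfFin_mem rfl a) hℓJ
  have hswap : ∀ a, Equiv.swap i ℓ (e₁ a) ∈ K := by
    intro a
    rcases eq_or_ne (e₁ a) i with h | h
    · simp [h, K]
    · simp [Equiv.swap_apply_of_ne_of_ne h (hℓ a), K, h, J.orderEmbOfFin_mem rfl a, e₁]
  set f : Fin J.card → Fin J.card := fun a => (K.orderIsoOfFin hK).symm ⟨_, hswap a⟩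
  have hf : ∀ a b, f a = b ↔ Equiv.swap i ℓ (e₁ a) = e₂ b := by
    intro a b
    rw [OrderIso.symm_apply_eq, Subtype.ext_iff, Finset.coe_orderIsoOfFin_apply]
  have hf_inj : Injective f := fun a b hab => by
    have := (hf a (f b)).mp hab
    rw [← (hf b (f b)).mp rfl] at this
    exact e₁.injective ((Equiv.swap i ℓ).injective this)
  rw [minorDet_eq_det_submatrix g hK]
  refine det_ne_zero_of_eq_ite _ hf_inj (s := fun a => if e₁ a = i then c else 1)
    (fun a => by split_ifs <;> simp [hc]) fun a b => ?_
  have hb : e₂ b ≠ i := ne_of_mem_of_not_mem (K.orderEmbOfFin_mem hK b) (by simp [K, hil])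
  change actMat g (e₁ a) (e₂ b) = if f a = b then _ else _
  rw [if_congr (hf a b) rfl rfl]
  rcases eq_or_ne (e₁ a) i with h | h
  · simp [h, hA, transvection, single_apply, one_apply, hb.symm]
  · simp [actMat_apply_of_ne hA h, one_apply, Equiv.swap_apply_of_ne_of_ne h (hℓ a), h]

theorem minorDet_insert_erase_eq_zero (hil : i ≠ ℓ) (hA : actMat g = transvection i ℓ c)
    {I J : Finset (Fin n)} (hiJ : i ∈ J) (hℓJ : ℓ ∉ J) (hIJ : I ≠ J)
    (hIK : I ≠ insert ℓ (J.erase i)) : minorDet g I (insert ℓ (J.erase i)) = 0 := by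
  set K := insert ℓ (J.erase i)
  have hiK : i ∉ K := by simp [K, hil]
  by_cases hcard : K.card = I.card
  swap
  · simp [minorDet, hcard]
  by_cases hrow : ∃ x ∈ I, x ≠ i ∧ x ∉ K
  · obtain ⟨x, hxI, hxi, hxK⟩ := hrow
    refine minorDet_eq_zero_of_row_eq_zero g hxI fun z hz => ?_
    rw [actMat_apply_of_ne hA hxi, one_apply_ne (ne_of_mem_of_not_mem hz hxK).symm]
  have hsub : ∀ x ∈ I, x ≠ i → x ∈ K := fun x hx hxi =>
    by_contra fun h => hrow ⟨x, hx, hxi, h⟩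
  by_cases hiI : i ∈ I
  swap
  · exact absurd (Finset.eq_of_subset_of_card_le
      (fun x hx => hsub x hx (ne_of_mem_of_not_mem hx hiI)) hcard.le) hIK
  by_cases hℓI : ℓ ∈ I
  · refine minorDet_eq_zero_of_row_eq_smul g hiI hℓI hil c fun z hz => ?_
    have hzi : i ≠ z := (ne_of_mem_of_not_mem hz hiK).symm
    rw [actMat_apply_of_ne hA hil.symm]
    by_cases hzℓ : ℓ = z <;> simp [hA, transvection, one_apply, hzi, hzℓ]
  · have hIJ' : I ⊆ J := fun x hx => by
      rcases eq_or_ne x i with rfl | hxi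
      · exact hiJ
      · have := hsub x hx hxi
        simp only [K, Finset.mem_insert, Finset.mem_erase] at this
        rcases this with rfl | h
        exacts [absurd hx hℓI, h.2]
    exact absurd (Finset.eq_of_subset_of_card_le hIJ'
      (by rw [← hcard, Finset.card_insert_erase_of_notMem hiJ hℓJ])) hIJ

theorem formAct_insert_erase (hil : i ≠ ℓ) (hA : actMat g = transvection i ℓ c)
    {J : Finset (Fin n)} (hiJ : i ∈ J) (hℓJ : ℓ ∉ J)
    (u : Finset (Fin n) → MvPolynomial (Fin n) F) :
    formAct g u (insert ℓ (J.erase i)) = polyAct g (u (insert ℓ (J.erase i))) +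
      polyAct g (u J) * C (minorDet g J (insert ℓ (J.erase i))) := by
  have hKJ : insert ℓ (J.erase i) ≠ J := fun h => hℓJ (h ▸ Finset.mem_insert_self ℓ _)
  rw [formAct, Finset.sum_eq_add _ _ hKJ (fun I _ hI => by
      rw [minorDet_insert_erase_eq_zero hil hA hiJ hℓJ hI.2 hI.1, C_0, mul_zero])
    (by simp) (by simp), minorDet_self_of_notMem hA (by simp [hil]), C_1, mul_one]

end MinorsOfTransvection

-- `l_H` is the last coordinate `z_n`, so `H = ker z_n`, and the root vectors `v_i` (`i < b`)
-- are the standard basis vectors.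
theorem stmt5_general {F : Type*} [Field F] {n : ℕ} (b : ℕ)
    (GH : Subgroup (GLn F (n + 1)))
    (htr : ∀ i : Fin (n + 1), (i : ℕ) < b →
      ∃ t ∈ GH, ∀ v : Fin (n + 1) → F, t v = v + v (Fin.last n) • (Pi.single i 1 : Fin (n + 1) → F))
    (u : Finset (Fin (n + 1)) → MvPolynomial (Fin (n + 1)) F)
    (hinv : ∀ g ∈ GH, LinearMap.det g.toLinearMap = 1 → formAct g u = u)
    (J : Finset (Fin (n + 1))) (hJb : ∃ i ∈ J, (i : ℕ) < b) (hJn : Fin.last n ∉ J) :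
    X (Fin.last n) ∣ u J := by
  obtain ⟨i, hiJ, hib⟩ := hJb
  obtain ⟨t, htG, ht⟩ := htr i hib
  have hil : i ≠ Fin.last n := ne_of_mem_of_not_mem hiJ hJn
  have hA := actMat_eq_transvection hil ht
  have hfix : ∀ v, v (Fin.last n) = 0 → t v = v := fun v hv => by simp [ht, hv]
  have hinvK := congrFun (hinv t htG (det_eq_one_of_transvection hil ht))
    (insert (Fin.last n) (J.erase i))
  rw [formAct_insert_erase hil hA hiJ hJn] at hinvK
  have hres := congrArg
    (aeval (update (X : Fin (n + 1) → MvPolynomial (Fin (n + 1)) F) (Fin.last n) 0)) hinvK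
  rw [map_add, map_mul, aeval_update_X_polyAct hfix, aeval_update_X_polyAct hfix, add_eq_left,
    aeval_C, mul_eq_zero] at hres
  refine X_dvd_iff_aeval_update_X_eq_zero.mpr (hres.resolve_right ?_)
  simpa using minorDet_insert_erase_ne_zero hil hA (neg_ne_zero.mpr one_ne_zero) hiJ hJn

/-- let `G_H` be a group of reflections about the hyperplane
`H = ker z_n` (here `V = F^{n+1}`, `z`'s the standard dual basis, `l_H = z_n` the last
coordinate), with `v_i = e_i` for `i < b` root vectors of transvections in `K_H`.
If `μ = ∑_I u_I dz_I` is invariant under `K_H` (the determinant-one part of `G_H`)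
and `J` meets `{0,…,b-1}` and omits the last index, then `l_H ∣ u_J`. -/
theorem stmt5 {F : Type*} [Field F] (h2 : ringChar F ≠ 2) {n : ℕ} (b : ℕ) (hb : b ≤ n)
    (GH : Subgroup (GLn F (n + 1)))
    (hfix : ∀ g ∈ GH, ∀ v : Fin (n + 1) → F, v (Fin.last n) = 0 → g v = v)
    (hrefl : ∀ g ∈ GH, g ≠ 1 → IsReflection g)
    (htr : ∀ i : Fin (n + 1), (i : ℕ) < b →
      ∃ t ∈ GH, ∀ v : Fin (n + 1) → F, t v = v + v (Fin.last n) • (Pi.single i 1 : Fin (n + 1) → F))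
    (u : Finset (Fin (n + 1)) → MvPolynomial (Fin (n + 1)) F)
    (hinv : ∀ g ∈ GH, LinearMap.det g.toLinearMap = 1 → formAct g u = u)
    (J : Finset (Fin (n + 1))) (hJb : ∃ i ∈ J, (i : ℕ) < b) (hJn : Fin.last n ∉ J) :
    X (Fin.last n) ∣ u J :=
  stmt5_general b GH htr u hinv J hJb hJn
end
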